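/- Let M_pq be the n×n complex matrix that is a direct sum of nilpotent upper Jordan blocks, written after collecting blocks of equal sizes in the permuted block form with diagonal blocks 0_u, 0_v, 0_w, … and identity off-diagonal blocks as in the block matrix whose block pattern is: first block row (0_u, 0, 0, 0, 0, 0, …), second (0, 0, I_v, 0, 0, 0, …), third (0, 0, 0, 0, 0, 0, …), fourth (0, 0, 0, 0, I_w, 0, …), fifth (0, 0, 0, 0, 0, I_w, …), sixth (0, 0, 0, 0, 0, 0, …), etc. (blocks of size k contributing a k-fold chain of identity blocks). Then for any nonsingular matrices S_1 ∈ GL_u(ℂ), S_2 ∈ GL_v(ℂ), S_3 ∈ GL_w(ℂ), …, the block-diagonal matrix S := S_1 ⊕ S_2 ⊕ conj(S_2) ⊕ S_3 ⊕ conj(S_3) ⊕ S_3 ⊕ ⋯ (each S_j occurring in j consecutive factors S_j, conj(S_j), S_j, …, so that consecutive factors alternate conjugation) satisfies conj(S)⁻¹ · M_pq · S = M_pq. -/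
import Mathlib


open Matrix

/-- Index set of the collected nilpotent Jordan matrix: for every Jordan size
`j + 1` (`j : Fin r`) there are `j + 1` block positions, each of size `s j`
(the multiplicity of the Jordan blocks of size `j + 1`). -/
abbrev JIdx (r : ℕ) (s : Fin r → ℕ) := (j : Fin r) × (Fin ((j : ℕ) + 1) × Fin (s j))

/-- The matrix `M_pq`: the direct sum of nilpotent upper Jordan blocks, with the
blocks of equal size collected; a Jordan block of size `j + 1` contributes, for
each multiplicity coordinate, the chain of identity entries linking consecutive
positions `a ↦ a + 1` within its group. -/
def Mpq (r : ℕ) (s : Fin r → ℕ) : Matrix (JIdx r s) (JIdx r s) ℂ :=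
  Matrix.of fun x y =>
    if (x.1 : ℕ) = (y.1 : ℕ) ∧ (y.2.1 : ℕ) = (x.2.1 : ℕ) + 1 ∧ (y.2.2 : ℕ) = (x.2.2 : ℕ)
    then 1 else 0

/-- The block-diagonal matrix `S = S_1 ⊕ S_2 ⊕ conj(S_2) ⊕ S_3 ⊕ conj(S_3) ⊕ S_3 ⊕ ⋯`:
within the group of Jordan size `j + 1`, the block at position `a` is the `a`-fold
entrywise conjugate of `T j` (so the factors alternate `T j, conj (T j), T j, …`). -/
noncomputable def Spq (r : ℕ) (s : Fin r → ℕ)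
    (T : ∀ j : Fin r, Matrix (Fin (s j)) (Fin (s j)) ℂ) :
    Matrix (JIdx r s) (JIdx r s) ℂ :=
  Matrix.of fun x y =>
    if h : x.1 = y.1 ∧ (x.2.1 : ℕ) = (y.2.1 : ℕ) then
      ((fun N : Matrix (Fin (s x.1)) (Fin (s x.1)) ℂ => N.map (starRingEnd ℂ))^[(x.2.1 : ℕ)]
          (T x.1)) x.2.2 (Fin.cast (congrArg s h.1.symm) y.2.2)
    else 0

/-- Iterated entrywise conjugation is multiplicative. -/
lemma iterConj_mul {n : ℕ} (k : ℕ) (A B : Matrix (Fin n) (Fin n) ℂ) :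
    (fun N : Matrix (Fin n) (Fin n) ℂ => N.map (starRingEnd ℂ))^[k] (A * B) =
    (fun N : Matrix (Fin n) (Fin n) ℂ => N.map (starRingEnd ℂ))^[k] A *
    (fun N : Matrix (Fin n) (Fin n) ℂ => N.map (starRingEnd ℂ))^[k] B := by
  induction k with
  | zero => simp
  | succ k ih =>
      simp only [Function.iterate_succ_apply', ih]
      exact Matrix.map_mul

/-- Iterated entrywise conjugation fixes the identity. -/
lemma iterConj_one {n : ℕ} (k : ℕ) :
    (fun N : Matrix (Fin n) (Fin n) ℂ => N.map (starRingEnd ℂ))^[k]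
      (1 : Matrix (Fin n) (Fin n) ℂ) = 1 := by
  induction k with
  | zero => simp
  | succ k ih =>
      simp only [Function.iterate_succ_apply', ih]
      simp [Matrix.map_one]

/-- Collapse a sum over `JIdx r s` supported on a single block position. -/
lemma sumCollapseJ {r : ℕ} {s : Fin r → ℕ} (j0 : Fin r) (a0 : Fin ((j0 : ℕ) + 1))
    (g : JIdx r s → ℂ)
    (h1 : ∀ z : JIdx r s, z.1 ≠ j0 → g z = 0)
    (h2 : ∀ (a : Fin ((j0 : ℕ) + 1)) (c : Fin (s j0)), a ≠ a0 → g ⟨j0, (a, c)⟩ = 0) :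
    ∑ z : JIdx r s, g z = ∑ c : Fin (s j0), g ⟨j0, (a0, c)⟩ := by
  calc ∑ z : JIdx r s, g z
      = ∑ j : Fin r, ∑ p : Fin ((j : ℕ) + 1) × Fin (s j), g ⟨j, p⟩ := by
        rw [← Finset.univ_sigma_univ, Finset.sum_sigma]
    _ = ∑ p : Fin ((j0 : ℕ) + 1) × Fin (s j0), g ⟨j0, p⟩ :=
        Finset.sum_eq_single j0
          (fun j _ hj => Finset.sum_eq_zero fun p _ => h1 ⟨j, p⟩ hj) (by simp)
    _ = ∑ a : Fin ((j0 : ℕ) + 1), ∑ c : Fin (s j0), g ⟨j0, (a, c)⟩ :=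
        Fintype.sum_prod_type _
    _ = ∑ c : Fin (s j0), g ⟨j0, (a0, c)⟩ :=
        Finset.sum_eq_single a0
          (fun a _ ha => Finset.sum_eq_zero fun c _ => h2 a c ha) (by simp)

lemma Spq_apply_pos {r : ℕ} {s : Fin r → ℕ}
    (T : ∀ j : Fin r, Matrix (Fin (s j)) (Fin (s j)) ℂ)
    (j : Fin r) (a a' : Fin ((j : ℕ) + 1)) (ha : (a : ℕ) = (a' : ℕ))
    (b c : Fin (s j)) :
    Spq r s T ⟨j, (a, b)⟩ ⟨j, (a', c)⟩ =
      ((fun N : Matrix (Fin (s j)) (Fin (s j)) ℂ => N.map (starRingEnd ℂ))^[(a : ℕ)]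
        (T j)) b c := by
  obtain rfl : a = a' := Fin.ext ha
  show dite _ _ _ = _
  rw [dif_pos (⟨rfl, rfl⟩ : j = j ∧ (a : ℕ) = (a : ℕ))]
  rfl

lemma Spq_apply_ne_fst {r : ℕ} {s : Fin r → ℕ}
    (T : ∀ j : Fin r, Matrix (Fin (s j)) (Fin (s j)) ℂ)
    (x y : JIdx r s) (h : x.1 ≠ y.1) : Spq r s T x y = 0 := by
  show dite _ _ _ = _
  rw [dif_neg]
  exact fun hc => h hc.1

lemma Spq_apply_ne_snd {r : ℕ} {s : Fin r → ℕ}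
    (T : ∀ j : Fin r, Matrix (Fin (s j)) (Fin (s j)) ℂ)
    (x y : JIdx r s) (h : (x.2.1 : ℕ) ≠ (y.2.1 : ℕ)) : Spq r s T x y = 0 := by
  show dite _ _ _ = _
  rw [dif_neg]
  exact fun hc => h hc.2

/-- `Spq` is multiplicative in the blocks. -/
lemma Spq_mul (r : ℕ) (s : Fin r → ℕ)
    (T T' : ∀ j : Fin r, Matrix (Fin (s j)) (Fin (s j)) ℂ) :
    Spq r s T * Spq r s T' = Spq r s (fun j => T j * T' j) := by
  ext x y
  obtain ⟨j, a, b⟩ := x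
  obtain ⟨j', a', b'⟩ := y
  rw [Matrix.mul_apply]
  have hsum : ∑ z : JIdx r s, Spq r s T ⟨j, (a, b)⟩ z * Spq r s T' z ⟨j', (a', b')⟩ =
      ∑ c : Fin (s j), Spq r s T ⟨j, (a, b)⟩ ⟨j, (a, c)⟩ *
        Spq r s T' ⟨j, (a, c)⟩ ⟨j', (a', b')⟩ := by
    refine sumCollapseJ j a _ (fun z hz => ?_) (fun a'' c ha => ?_)
    · rw [Spq_apply_ne_fst T _ _ (fun h => hz h.symm), zero_mul]
    · rw [Spq_apply_ne_snd T _ _ (fun h => ha (Fin.ext h.symm)), zero_mul]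
  rw [hsum]
  by_cases h : j = j' ∧ (a : ℕ) = (a' : ℕ)
  · obtain ⟨rfl, ha⟩ := h
    obtain rfl : a = a' := Fin.ext ha
    rw [Spq_apply_pos (fun j => T j * T' j) j a a rfl b b', iterConj_mul, Matrix.mul_apply]
    refine Finset.sum_congr rfl fun c _ => ?_
    rw [Spq_apply_pos T j a a rfl b c, Spq_apply_pos T' j a a rfl c b']
  · rw [show Spq r s (fun j => T j * T' j) ⟨j, (a, b)⟩ ⟨j', (a', b')⟩ = 0 from
      dif_neg h]
    refine Finset.sum_eq_zero fun c _ => ?_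
    by_cases hj : j = j'
    · subst hj
      rw [Spq_apply_ne_snd T' _ _ (fun hc => h ⟨rfl, hc⟩), mul_zero]
    · rw [Spq_apply_ne_fst T' _ _ hj, mul_zero]

/-- `Spq` sends the identity blocks to the identity. -/
lemma Spq_one (r : ℕ) (s : Fin r → ℕ) :
    Spq r s (fun j => (1 : Matrix (Fin (s j)) (Fin (s j)) ℂ)) = 1 := by
  ext x y
  obtain ⟨j, a, b⟩ := x
  obtain ⟨j', a', b'⟩ := y
  by_cases h : j = j' ∧ (a : ℕ) = (a' : ℕ)
  · obtain ⟨rfl, ha⟩ := h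
    obtain rfl : a = a' := Fin.ext ha
    rw [Spq_apply_pos _ j a a rfl b b', iterConj_one, Matrix.one_apply, Matrix.one_apply]
    by_cases hb : b = b'
    · subst hb; rw [if_pos rfl, if_pos rfl]
    · rw [if_neg hb, if_neg (fun hc => hb (by
        have := congrArg (fun z : JIdx r s => (z.2.2 : ℕ)) hc
        exact Fin.ext this))]
  · rw [show Spq r s _ ⟨j, (a, b)⟩ ⟨j', (a', b')⟩ = 0 from dif_neg h, Matrix.one_apply,
      if_neg]
    intro hc
    obtain ⟨rfl, h2⟩ := Sigma.mk.inj_iff.1 hc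
    exact h ⟨rfl, by cases h2; rfl⟩

/-- Entrywise conjugation of `Spq` conjugates the blocks. -/
lemma Spq_map (r : ℕ) (s : Fin r → ℕ)
    (T : ∀ j : Fin r, Matrix (Fin (s j)) (Fin (s j)) ℂ) :
    (Spq r s T).map (starRingEnd ℂ) = Spq r s (fun j => (T j).map (starRingEnd ℂ)) := by
  ext x y
  simp only [Matrix.map_apply, Spq, Matrix.of_apply]
  split_ifs with h
  · rw [← Function.iterate_succ_apply, Function.iterate_succ_apply']
    rfl
  · exact map_zero _

/-- The key intertwining identity: `M ⬝ S = conj(S) ⬝ M`. -/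
lemma MS_eq_conjS_M (r : ℕ) (s : Fin r → ℕ)
    (T : ∀ j : Fin r, Matrix (Fin (s j)) (Fin (s j)) ℂ) :
    Mpq r s * Spq r s T = Spq r s (fun j => (T j).map (starRingEnd ℂ)) * Mpq r s := by
  ext x y
  obtain ⟨j, a, b⟩ := x
  obtain ⟨j', a', b'⟩ := y
  rw [Matrix.mul_apply, Matrix.mul_apply]
  have hL : ∑ z : JIdx r s, Mpq r s ⟨j, (a, b)⟩ z * Spq r s T z ⟨j', (a', b')⟩ =
      ∑ c : Fin (s j'), Mpq r s ⟨j, (a, b)⟩ ⟨j', (a', c)⟩ *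
        Spq r s T ⟨j', (a', c)⟩ ⟨j', (a', b')⟩ := by
    refine sumCollapseJ j' a' _ (fun z hz => ?_) (fun a'' c ha => ?_)
    · rw [Spq_apply_ne_fst T _ _ hz, mul_zero]
    · rw [Spq_apply_ne_snd T _ _ (fun h => ha (Fin.ext h)), mul_zero]
  have hR : ∑ z : JIdx r s,
      Spq r s (fun j => (T j).map (starRingEnd ℂ)) ⟨j, (a, b)⟩ z *
        Mpq r s z ⟨j', (a', b')⟩ =
      ∑ c : Fin (s j), Spq r s (fun j => (T j).map (starRingEnd ℂ)) ⟨j, (a, b)⟩ ⟨j, (a, c)⟩ *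
        Mpq r s ⟨j, (a, c)⟩ ⟨j', (a', b')⟩ := by
    refine sumCollapseJ j a _ (fun z hz => ?_) (fun a'' c ha => ?_)
    · rw [Spq_apply_ne_fst _ _ _ (fun h => hz h.symm), zero_mul]
    · rw [Spq_apply_ne_snd _ _ _ (fun h => ha (Fin.ext h.symm)), zero_mul]
  rw [hL, hR]
  by_cases hP : (j : ℕ) = (j' : ℕ) ∧ (a' : ℕ) = (a : ℕ) + 1
  · obtain ⟨hj, haa⟩ := hP
    obtain rfl : j = j' := Fin.ext hj
    have hL2 : ∑ c : Fin (s j), Mpq r s ⟨j, (a, b)⟩ ⟨j, (a', c)⟩ *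
        Spq r s T ⟨j, (a', c)⟩ ⟨j, (a', b')⟩ =
        Mpq r s ⟨j, (a, b)⟩ ⟨j, (a', b)⟩ * Spq r s T ⟨j, (a', b)⟩ ⟨j, (a', b')⟩ :=
      Finset.sum_eq_single b
        (fun c _ hc => by
          rw [show Mpq r s ⟨j, (a, b)⟩ ⟨j, (a', c)⟩ = 0 from
            if_neg (fun h => hc (Fin.ext h.2.2)), zero_mul]) (by simp)
    have hR2 : ∑ c : Fin (s j),
        Spq r s (fun j => (T j).map (starRingEnd ℂ)) ⟨j, (a, b)⟩ ⟨j, (a, c)⟩ *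
          Mpq r s ⟨j, (a, c)⟩ ⟨j, (a', b')⟩ =
        Spq r s (fun j => (T j).map (starRingEnd ℂ)) ⟨j, (a, b)⟩ ⟨j, (a, b')⟩ *
          Mpq r s ⟨j, (a, b')⟩ ⟨j, (a', b')⟩ :=
      Finset.sum_eq_single b'
        (fun c _ hc => by
          rw [show Mpq r s ⟨j, (a, c)⟩ ⟨j, (a', b')⟩ = 0 from
            if_neg (fun h => hc (Fin.ext h.2.2).symm), mul_zero]) (by simp)
    rw [hL2, hR2,
      show Mpq r s ⟨j, (a, b)⟩ ⟨j, (a', b)⟩ = 1 from if_pos ⟨rfl, haa, rfl⟩,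
      show Mpq r s ⟨j, (a, b')⟩ ⟨j, (a', b')⟩ = 1 from if_pos ⟨rfl, haa, rfl⟩,
      one_mul, mul_one, Spq_apply_pos T j a' a' rfl b b',
      Spq_apply_pos _ j a a rfl b b']
    show _ = ((fun N : Matrix (Fin (s j)) (Fin (s j)) ℂ =>
      N.map (starRingEnd ℂ))^[(a : ℕ)] ((T j).map (starRingEnd ℂ))) b b'
    rw [← Function.iterate_succ_apply, haa]
  · refine Eq.trans (Finset.sum_eq_zero fun c _ => ?_) (Finset.sum_eq_zero fun c _ => ?_).symm
    · rw [show Mpq r s ⟨j, (a, b)⟩ ⟨j', (a', c)⟩ = 0 from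
        if_neg (fun hc => hP ⟨hc.1, hc.2.1⟩), zero_mul]
    · rw [show Mpq r s ⟨j, (a, c)⟩ ⟨j', (a', b')⟩ = 0 from
        if_neg (fun hc => hP ⟨hc.1, hc.2.1⟩), mul_zero]

/-- For any nonsingular matrices `T j` (`j` ranging over the occurring Jordan
sizes), the block-diagonal matrix `S = S_1 ⊕ S_2 ⊕ conj(S_2) ⊕ S_3 ⊕ conj(S_3) ⊕ S_3 ⊕ ⋯`
satisfies `conj(S)⁻¹ · M_pq · S = M_pq`. -/
theorem consimilarity_preserves_collected_nilpotent_jordan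
    (r : ℕ) (s : Fin r → ℕ)
    (T : ∀ j : Fin r, Matrix (Fin (s j)) (Fin (s j)) ℂ)
    (hT : ∀ j, IsUnit (T j)) :
    ((Spq r s T).map (starRingEnd ℂ))⁻¹ * Mpq r s * Spq r s T = Mpq r s := by
  have hunit : ∀ j, IsUnit ((T j).map (starRingEnd ℂ)) :=
    fun j => (hT j).map ((starRingEnd ℂ).mapMatrix)
  have hAB : (Spq r s T).map (starRingEnd ℂ) *
      Spq r s (fun j => ((T j).map (starRingEnd ℂ))⁻¹) = 1 := by
    rw [Spq_map, Spq_mul]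
    have : (fun j => (T j).map (starRingEnd ℂ) * ((T j).map (starRingEnd ℂ))⁻¹) =
        (fun j => (1 : Matrix (Fin (s j)) (Fin (s j)) ℂ)) := by
      funext j
      exact Matrix.mul_nonsing_inv _ ((Matrix.isUnit_iff_isUnit_det _).1 (hunit j))
    rw [this, Spq_one]
  have hdet : IsUnit ((Spq r s T).map (starRingEnd ℂ)).det :=
    Matrix.isUnit_det_of_right_inverse hAB
  rw [mul_assoc, MS_eq_conjS_M, ← Spq_map, ← mul_assoc, Matrix.nonsing_inv_mul _ hdet,
    one_mul]
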